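/- In this 4-dimensional setting the Gray-Hervella classes are characterized as follows: (1) ∇ω = 0 (Kähler) if and only if p = q = r = s = 0, a = d = 0 and b = −c; (2) dω = 0 (almost Kähler, class W₂) if and only if p = q = 0 and a + d = 0; (3) N = 0 (Hermitian, class W₄) if and only if r = s = 0, a = d and b + c = 0. -/
import Mathlib


open scoped BigOperators
open Matrix

noncomputable section

/-- The underlying 4-dimensional real vector space `ℝ⁴`, whose standard basis plays
the role of the orthonormal basis `e₀, e₁, e₂, e₃`. -/
abbrev G4 := Fin 4 → ℝ

/-- The inner product making the standard basis orthonormal. -/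
def inn4 (x y : G4) : ℝ := ∑ i, x i * y i

/-- The orthogonal almost complex structure with `J e₀ = e₁`, `J e₂ = e₃`. -/
def J4 : Matrix (Fin 4) (Fin 4) ℝ :=
  !![0, -1, 0, 0; 1, 0, 0, 0; 0, 0, 0, -1; 0, 0, 1, 0]

/-- The matrix of `L` on `u = span{e₁,e₂,e₃}` (rows `(μ,r,s), (p,a,b), (q,c,d)`),
extended by `L e₀ = 0`. -/
def L4 (μ r s p a b q c d : ℝ) : Matrix (Fin 4) (Fin 4) ℝ :=
  !![0, 0, 0, 0; 0, μ, r, s; 0, p, a, b; 0, q, c, d]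

/-- The Lie bracket of `g = ℝ e₀ ⋉_L u`. -/
def br4 (L : Matrix (Fin 4) (Fin 4) ℝ) (x y : G4) : G4 :=
  x 0 • L.mulVec y - y 0 • L.mulVec x

/-- `nabla` is the Levi-Civita connection, i.e. satisfies the Koszul formula. -/
def Koszul4 (L : Matrix (Fin 4) (Fin 4) ℝ) (nabla : G4 → G4 → G4) : Prop :=
  ∀ x y z : G4, 2 * inn4 (nabla x y) z
    = inn4 (br4 L x y) z - inn4 (br4 L y z) x + inn4 (br4 L z x) y

/-- `(∇_y J)(x) = ∇_y (Jx) − J ∇_y x`. -/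
def covJ4 (nabla : G4 → G4 → G4) (y x : G4) : G4 :=
  nabla y (J4.mulVec x) - J4.mulVec (nabla y x)

/-- The rough Laplacian `(∇*∇J)(x)`. -/
def roughLap4 (nabla : G4 → G4 → G4) (x : G4) : G4 :=
  ∑ i : Fin 4,
    (nabla (Pi.single i 1) (covJ4 nabla (Pi.single i 1) x)
      - covJ4 nabla (Pi.single i 1) (nabla (Pi.single i 1) x)
      - covJ4 nabla (nabla (Pi.single i 1) (Pi.single i 1)) x)

/-- `J` is harmonic: `J ∘ (∇*∇J) = (∇*∇J) ∘ J`. -/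
def Harmonic4 (nabla : G4 → G4 → G4) : Prop :=
  ∀ x : G4, J4.mulVec (roughLap4 nabla x) = roughLap4 nabla (J4.mulVec x)

/-- The fundamental 2-form `ω(x,y) = ⟨Jx, y⟩`. -/
def om4 (x y : G4) : ℝ := inn4 (J4.mulVec x) y

/-- `(∇_x ω)(y,z)`. -/
def nablaOm4 (nabla : G4 → G4 → G4) (x y z : G4) : ℝ :=
  - om4 (nabla x y) z - om4 y (nabla x z)

/-- `dω(x,y,z)`. -/
def dOm4 (L : Matrix (Fin 4) (Fin 4) ℝ) (x y z : G4) : ℝ :=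
  - om4 (br4 L x y) z - om4 (br4 L y z) x - om4 (br4 L z x) y

/-- The Nijenhuis tensor. -/
def Nij4 (L : Matrix (Fin 4) (Fin 4) ℝ) (x y : G4) : G4 :=
  br4 L x y
    + J4.mulVec (br4 L (J4.mulVec x) y + br4 L x (J4.mulVec y))
    - br4 L (J4.mulVec x) (J4.mulVec y)


-- auxiliary
def Fk4 (L : Matrix (Fin 4) (Fin 4) ℝ) (x y z : G4) : ℝ :=
  (inn4 (br4 L x y) (J4.mulVec z) - inn4 (br4 L y (J4.mulVec z)) x
      + inn4 (br4 L (J4.mulVec z) x) y)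
    - (inn4 (br4 L x z) (J4.mulVec y) - inn4 (br4 L z (J4.mulVec y)) x
      + inn4 (br4 L (J4.mulVec y) x) z)

lemma inn4_symm (x y : G4) : inn4 x y = inn4 y x :=
  Finset.sum_congr rfl (fun i _ => mul_comm _ _)

lemma om4_skew (u z : G4) : om4 u z = - inn4 u (J4.mulVec z) := by
  simp [om4, inn4, J4, Matrix.mulVec, dotProduct, Fin.sum_univ_four,
    Matrix.cons_val_zero, Matrix.cons_val_one, Matrix.head_cons,
    Matrix.cons_val_two, Matrix.tail_cons, Matrix.cons_val_three,
    Matrix.cons_val', Matrix.empty_val', Matrix.cons_val_fin_one,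
    Matrix.vecHead, Matrix.vecTail, Matrix.cons_val_succ, Function.comp_apply, Fin.succ_zero_eq_one, Fin.succ_one_eq_two]
  ring

lemma key4 {L : Matrix (Fin 4) (Fin 4) ℝ} {nabla : G4 → G4 → G4}
    (hK : Koszul4 L nabla) (x y z : G4) :
    2 * nablaOm4 nabla x y z = Fk4 L x y z := by
  have h1 := hK x y (J4.mulVec z)
  have h2 := hK x z (J4.mulVec y)
  have e1 : om4 (nabla x y) z = - inn4 (nabla x y) (J4.mulVec z) := om4_skew _ _
  have e2 : om4 y (nabla x z) = inn4 (nabla x z) (J4.mulVec y) := by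
    simp only [om4]; exact inn4_symm _ _
  simp only [nablaOm4, Fk4, e1, e2]
  linarith


lemma J4_mulVec (x : G4) : J4.mulVec x = ![-(x 1), x 0, -(x 3), x 2] := by
  funext i
  fin_cases i <;>
    simp [J4, Matrix.mulVec, dotProduct, Fin.sum_univ_four,
      Matrix.cons_val_zero, Matrix.cons_val_one, Matrix.head_cons,
      Matrix.cons_val_two, Matrix.tail_cons, Matrix.cons_val_three,
      Matrix.cons_val', Matrix.empty_val', Matrix.cons_val_fin_one,
      Matrix.vecHead, Matrix.vecTail, Matrix.cons_val_succ, Function.comp_apply, Fin.succ_zero_eq_one, Fin.succ_one_eq_two] <;> ring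

lemma L4_mulVec (μ r s p a b q c d : ℝ) (x : G4) :
    (L4 μ r s p a b q c d).mulVec x
      = ![0, μ * x 1 + r * x 2 + s * x 3, p * x 1 + a * x 2 + b * x 3,
          q * x 1 + c * x 2 + d * x 3] := by
  funext i
  fin_cases i <;>
    simp [L4, Matrix.mulVec, dotProduct, Fin.sum_univ_four,
      Matrix.cons_val_zero, Matrix.cons_val_one, Matrix.head_cons,
      Matrix.cons_val_two, Matrix.tail_cons, Matrix.cons_val_three,
      Matrix.cons_val', Matrix.empty_val', Matrix.cons_val_fin_one,
      Matrix.vecHead, Matrix.vecTail, Matrix.cons_val_succ, Function.comp_apply, Fin.succ_zero_eq_one, Fin.succ_one_eq_two] <;> ring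


lemma G4_ext {f : G4} (h0 : f 0 = 0) (h1 : f 1 = 0) (h2 : f 2 = 0)
    (h3 : f 3 = 0) : f = 0 := by
  funext i; fin_cases i <;> assumption

def be0 : G4 := ![1,0,0,0]
def be1 : G4 := ![0,1,0,0]
def be2 : G4 := ![0,0,1,0]
def be3 : G4 := ![0,0,0,1]

set_option maxHeartbeats 2000000 in
/-- Corollary 4.3: Gray-Hervella classes in dimension 4. -/
theorem statement16 (μ r s p a b q c d : ℝ)
    (nabla : G4 → G4 → G4) (hK : Koszul4 (L4 μ r s p a b q c d) nabla) :
    ((∀ x y z : G4, nablaOm4 nabla x y z = 0)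
        ↔ (p = 0 ∧ q = 0 ∧ r = 0 ∧ s = 0 ∧ a = 0 ∧ d = 0 ∧ b = -c))
      ∧ ((∀ x y z : G4, dOm4 (L4 μ r s p a b q c d) x y z = 0)
        ↔ (p = 0 ∧ q = 0 ∧ a + d = 0))
      ∧ ((∀ x y : G4, Nij4 (L4 μ r s p a b q c d) x y = 0)
        ↔ (r = 0 ∧ s = 0 ∧ a = d ∧ b + c = 0)) := by
  refine ⟨⟨fun h => ?_, fun h x y z => ?_⟩, ⟨fun h => ?_, fun h x y z => ?_⟩,
    ⟨fun h => ?_, fun h x y => ?_⟩⟩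
  · have h1 := key4 hK be0 be0 be2; rw [h be0 be0 be2] at h1
    have h2 := key4 hK be1 be0 be3; rw [h be1 be0 be3] at h2
    have h3 := key4 hK be0 be0 be3; rw [h be0 be0 be3] at h3
    have h4 := key4 hK be1 be1 be3; rw [h be1 be1 be3] at h4
    have h5 := key4 hK be2 be0 be3; rw [h be2 be0 be3] at h5
    have h6 := key4 hK be3 be1 be3; rw [h be3 be1 be3] at h6
    have h7 := key4 hK be2 be1 be3; rw [h be2 be1 be3] at h7
    simp [Fk4, br4, inn4, J4_mulVec, L4_mulVec, be0, be1, be2, be3,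
      Fin.sum_univ_four, Matrix.cons_val_zero,
      Matrix.cons_val_one, Matrix.head_cons, Matrix.cons_val_two,
      Matrix.tail_cons, Matrix.cons_val_three, Matrix.cons_val',
      Matrix.empty_val', Matrix.cons_val_fin_one, Matrix.vecHead,
      Matrix.vecTail] at h1 h2 h3 h4 h5 h6 h7
    refine ⟨by linarith, by linarith, by linarith, by linarith, by linarith,
      by linarith, by linarith⟩
  · obtain ⟨hp, hq, hr, hs, ha, hd, hb⟩ := h
    subst hp hq hr hs ha hd hb
    have h1 := key4 hK x y z
    have hF : Fk4 (L4 μ 0 0 0 0 (-c) 0 c 0) x y z = 0 := by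
      simp only [Fk4, br4, inn4, J4_mulVec, L4_mulVec,
        Fin.sum_univ_four, Matrix.cons_val_zero, Matrix.cons_val_one,
        Matrix.head_cons, Matrix.cons_val_two, Matrix.tail_cons,
        Matrix.cons_val_three, Matrix.cons_val', Matrix.empty_val',
        Matrix.cons_val_fin_one, Matrix.vecHead, Matrix.vecTail, Matrix.cons_val_succ, Function.comp_apply, Fin.succ_zero_eq_one, Fin.succ_one_eq_two,
        Pi.sub_apply, Pi.smul_apply, smul_eq_mul]
      ring
    rw [hF] at h1; linarith
  · have h1 := h be0 be1 be2
    have h2 := h be0 be1 be3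
    have h3 := h be0 be2 be3
    simp [dOm4, om4, br4, inn4, J4_mulVec, L4_mulVec, be0, be1, be2, be3,
      Fin.sum_univ_four, Matrix.cons_val_zero,
      Matrix.cons_val_one, Matrix.head_cons, Matrix.cons_val_two,
      Matrix.tail_cons, Matrix.cons_val_three, Matrix.cons_val',
      Matrix.empty_val', Matrix.cons_val_fin_one, Matrix.vecHead,
      Matrix.vecTail] at h1 h2 h3
    refine ⟨by linarith, by linarith, by linarith⟩
  · obtain ⟨hp, hq, had⟩ := h
    have hd : d = -a := by linarith
    subst hp hq hd
    simp only [dOm4, om4, br4, inn4, J4_mulVec, L4_mulVec,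
      Fin.sum_univ_four, Matrix.cons_val_zero, Matrix.cons_val_one,
      Matrix.head_cons, Matrix.cons_val_two, Matrix.tail_cons,
      Matrix.cons_val_three, Matrix.cons_val', Matrix.empty_val',
      Matrix.cons_val_fin_one, Matrix.vecHead, Matrix.vecTail, Matrix.cons_val_succ, Function.comp_apply, Fin.succ_zero_eq_one, Fin.succ_one_eq_two,
      Pi.sub_apply, Pi.smul_apply, smul_eq_mul]
    ring
  · have h0 := congrFun (h be0 be2) 0
    have h1 := congrFun (h be0 be2) 1
    have h2 := congrFun (h be0 be2) 2
    have h3 := congrFun (h be0 be2) 3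
    simp [Nij4, br4, inn4, J4_mulVec, L4_mulVec, be0, be2,
      Fin.sum_univ_four, Matrix.cons_val_zero,
      Matrix.cons_val_one, Matrix.head_cons, Matrix.cons_val_two,
      Matrix.tail_cons, Matrix.cons_val_three, Matrix.cons_val',
      Matrix.empty_val', Matrix.cons_val_fin_one, Matrix.vecHead,
      Matrix.vecTail, Pi.add_apply, Pi.sub_apply, Pi.smul_apply,
      smul_eq_mul] at h0 h1 h2 h3
    refine ⟨by linarith, by linarith, by linarith, by linarith⟩
  · obtain ⟨hr, hs, ha, hbc⟩ := h
    have hc : c = -b := by linarith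
    subst hr hs ha hc
    refine G4_ext ?_ ?_ ?_ ?_ <;>
      (simp only [Nij4, br4, inn4, J4_mulVec, L4_mulVec,
        Fin.sum_univ_four, Matrix.cons_val_zero, Matrix.cons_val_one,
        Matrix.head_cons, Matrix.cons_val_two, Matrix.tail_cons,
        Matrix.cons_val_three, Matrix.cons_val', Matrix.empty_val',
        Matrix.cons_val_fin_one, Matrix.vecHead, Matrix.vecTail, Matrix.cons_val_succ, Function.comp_apply, Fin.succ_zero_eq_one, Fin.succ_one_eq_two,
        Pi.add_apply, Pi.sub_apply, Pi.smul_apply, smul_eq_mul,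
        Pi.zero_apply]; ring)
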